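/- arXiv:1602.08418 — 5 statements merged into one kernel-verified Lean document; each statement's English description precedes it below -/
import Mathlib

section
/- Let Ψ be a symmetric real n×n matrix with nonnegative entries, and let p, q be vectors with strictly positive entries. Then pᵀ Ψ p ≤ qᵀ Ψ [p²/q], where [p²/q] denotes the vector with entries p_i²/q_i. -/
/-! Symmetrising the right-hand side over `i ↔ j` gives
`2 (qᵀ Ψ [p²/q] - pᵀ Ψ p) = ∑ i j, Ψ i j * q i * q j * (p i / q i - p j / q j) ^ 2`,
a sum of nonnegative terms. -/

open Finset

lemma Matrix.IsSymm.sum_mul_mul_comm {ι R : Type*} [Fintype ι] [CommSemiring R]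
    {Ψ : Matrix ι ι R} (hΨ : Ψ.IsSymm) (f g : ι → R) :
    ∑ i, ∑ j, f i * Ψ i j * g j = ∑ i, ∑ j, g i * Ψ i j * f j := by
  rw [sum_comm]
  refine sum_congr rfl fun i _ => sum_congr rfl fun j _ => ?_
  rw [hΨ.apply i j]
  ring

lemma mul_sq_div_add_mul_sq_div_sub_two_mul {K : Type*} [Field K] {a b s t : K}
    (hs : s ≠ 0) (ht : t ≠ 0) :
    s * (b ^ 2 / t) + t * (a ^ 2 / s) - 2 * (a * b) = s * t * (a / s - b / t) ^ 2 := by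
  field_simp
  ring

lemma Matrix.IsSymm.two_mul_sum_sq_div_sub_quadratic {ι K : Type*} [Fintype ι] [Field K]
    {Ψ : Matrix ι ι K} (hΨ : Ψ.IsSymm) (p q : ι → K) (hq : ∀ i, q i ≠ 0) :
    2 * (∑ i, ∑ j, q i * Ψ i j * (p j ^ 2 / q j) - ∑ i, ∑ j, p i * Ψ i j * p j) =
      ∑ i, ∑ j, Ψ i j * (q i * q j * (p i / q i - p j / q j) ^ 2) := by
  have hexpand : ∑ i, ∑ j, Ψ i j * (q i * q j * (p i / q i - p j / q j) ^ 2) =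
      ∑ i, ∑ j, q i * Ψ i j * (p j ^ 2 / q j) + ∑ i, ∑ j, p i ^ 2 / q i * Ψ i j * q j -
        2 * ∑ i, ∑ j, p i * Ψ i j * p j := by
    simp only [mul_sum, ← sum_add_distrib, ← sum_sub_distrib]
    refine sum_congr rfl fun i _ => sum_congr rfl fun j _ => ?_
    rw [← mul_sq_div_add_mul_sq_div_sub_two_mul (hq i) (hq j)]
    ring
  rw [hexpand, ← hΨ.sum_mul_mul_comm q fun j => p j ^ 2 / q j]
  ring

theorem quadratic_form_upper_bound_general {n : ℕ} (Ψ : Matrix (Fin n) (Fin n) ℝ)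
    (hsymm : Ψ.IsSymm) (hnonneg : ∀ i j, 0 ≤ Ψ i j)
    (p q : Fin n → ℝ) (hq : ∀ i, 0 < q i) :
    ∑ i, ∑ j, p i * Ψ i j * p j ≤ ∑ i, ∑ j, q i * Ψ i j * (p j ^ 2 / q j) := by
  have hgap := hsymm.two_mul_sum_sq_div_sub_quadratic p q fun i => (hq i).ne'
  have hnonneg_gap : 0 ≤ ∑ i, ∑ j, Ψ i j * (q i * q j * (p i / q i - p j / q j) ^ 2) :=
    sum_nonneg fun i _ => sum_nonneg fun j _ =>
      mul_nonneg (hnonneg i j) (mul_nonneg (mul_pos (hq i) (hq j)).le (sq_nonneg _))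
  linarith

theorem quadratic_form_upper_bound {n : ℕ} (Ψ : Matrix (Fin n) (Fin n) ℝ)
    (hsymm : Ψ.IsSymm) (hnonneg : ∀ i j, 0 ≤ Ψ i j)
    (p q : Fin n → ℝ) (hp : ∀ i, 0 < p i) (hq : ∀ i, 0 < q i) :
    ∑ i, ∑ j, p i * Ψ i j * p j ≤ ∑ i, ∑ j, q i * Ψ i j * (p j ^ 2 / q j) :=
  quadratic_form_upper_bound_general Ψ hsymm hnonneg p q hq
end

section
/- Let Ξ be a symmetric n×n real matrix with strictly positive entries, and let p, q be vectors with strictly positive entries. Then ln(pᵀ Ξ p) ≥ (2 qᵀ Ξ [q ln(p/q)]) / (qᵀ Ξ q) + ln(qᵀ Ξ q), where [q ln(p/q)] is the vector with entries q_i * ln(p_i/q_i). -/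
/-!
With weights `w i j = q i * Ξ i j * q j`, Jensen's inequality for the concave logarithm gives
`∑ w log (p i p j / q i q j) / ∑ w ≤ log (∑ w (p i p j / q i q j) / ∑ w) = log (pᵀ Ξ p / qᵀ Ξ q)`.
Since `log (p i p j / q i q j) = log (p i / q i) + log (p j / q j)`, symmetry of `Ξ` turns the left
side into `2 qᵀ Ξ [q ln(p/q)] / qᵀ Ξ q`.
-/

open Finset Real

theorem Real.sum_mul_log_div_le_log_sum_mul_div {ι : Type*} (s : Finset ι) {w x : ι → ℝ}
    (hw : ∀ i ∈ s, 0 ≤ w i) (hw₀ : 0 < ∑ i ∈ s, w i) (hx : ∀ i ∈ s, 0 < x i) :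
    (∑ i ∈ s, w i * log (x i)) / ∑ i ∈ s, w i ≤ log ((∑ i ∈ s, w i * x i) / ∑ i ∈ s, w i) := by
  have := strictConcaveOn_log_Ioi.concaveOn.le_map_centerMass hw hw₀ hx
  simpa [centerMass, div_eq_inv_mul] using this

theorem Matrix.IsSymm.sum_sum_mul_add {n : Type*} [Fintype n] {Ξ : Matrix n n ℝ} (hΞ : Ξ.IsSymm)
    (q f : n → ℝ) :
    ∑ i, ∑ j, q i * Ξ i j * q j * (f i + f j) = 2 * ∑ i, ∑ j, q i * Ξ i j * (q j * f j) := by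
  have hswap : ∑ i, ∑ j, q i * Ξ i j * q j * f i = ∑ i, ∑ j, q i * Ξ i j * (q j * f j) := by
    rw [Finset.sum_comm]
    refine Finset.sum_congr rfl fun j _ => Finset.sum_congr rfl fun i _ => ?_
    rw [hΞ.apply i j]
    ring
  simp only [mul_add, Finset.sum_add_distrib, hswap]
  simp only [mul_assoc, two_mul]

theorem log_quadratic_form_lower_bound {n : ℕ} (Ξ : Matrix (Fin n) (Fin n) ℝ)
    (hsymm : Ξ.IsSymm) (hpos : ∀ i j, 0 < Ξ i j)
    (p q : Fin n → ℝ) (hp : ∀ i, 0 < p i) (hq : ∀ i, 0 < q i) :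
    Real.log (∑ i, ∑ j, p i * Ξ i j * p j) ≥
      2 * (∑ i, ∑ j, q i * Ξ i j * (q j * Real.log (p j / q j))) /
        (∑ i, ∑ j, q i * Ξ i j * q j) +
      Real.log (∑ i, ∑ j, q i * Ξ i j * q j) := by
  rcases isEmpty_or_nonempty (Fin n) with _ | _
  · simp
  have hw : ∀ i j, 0 < q i * Ξ i j * q j := fun i j => by
    have := hpos i j; have := hq i; have := hq j; positivity
  have hS : 0 < ∑ i, ∑ j, q i * Ξ i j * q j :=
    sum_pos (fun i _ => sum_pos (fun j _ => hw i j) univ_nonempty) univ_nonempty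
  have hA : 0 < ∑ i, ∑ j, p i * Ξ i j * p j :=
    sum_pos (fun i _ => sum_pos (fun j _ => by
      have := hpos i j; have := hp i; have := hp j; positivity) univ_nonempty) univ_nonempty
  have jensen := sum_mul_log_div_le_log_sum_mul_div (univ : Finset (Fin n × Fin n))
    (w := fun ij => q ij.1 * Ξ ij.1 ij.2 * q ij.2)
    (x := fun ij => p ij.1 / q ij.1 * (p ij.2 / q ij.2))
    (fun ij _ => (hw ij.1 ij.2).le) (by rwa [Fintype.sum_prod_type])
    (fun ij _ => by have := hp ij.1; have := hp ij.2; have := hq ij.1; have := hq ij.2; positivity)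
  simp only [Fintype.sum_prod_type] at jensen
  have hmass : ∀ i j, q i * Ξ i j * q j * (p i / q i * (p j / q j)) = p i * Ξ i j * p j :=
    fun i j => by have := hq i; have := hq j; field_simp
  have hlog : ∀ i j, log (p i / q i * (p j / q j)) = log (p i / q i) + log (p j / q j) :=
    fun i j => by
      have := hp i; have := hp j; have := hq i; have := hq j
      exact log_mul (by positivity) (by positivity)
  simp only [hmass, hlog, hsymm.sum_sum_mul_add] at jensen
  rw [log_div hA.ne' hS.ne'] at jensen
  linarith
end

section
/- Let f(p) = -∑_{k=1}^K ln(pᵀ Ξ^k p) + pᵀ Ψ p on positive vectors p, where each Ξ^k is symmetric with strictly positive entries and Ψ is symmetric with nonnegative entries. Then g(p,q) = -∑_k [ (2 qᵀ Ξ^k [q ln(p/q)]) / (qᵀ Ξ^k q) + ln(qᵀ Ξ^k q) ] + qᵀ Ψ [p²/q] is an auxiliary function for f, i.e., g(p,q) ≥ f(p) for all positive p,q and g(p,p) = f(p). -/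
/-!
The quadratic term is majorized termwise by AM-GM, `2 pᵢ pⱼ ≤ qᵢ pⱼ² / qⱼ + qⱼ pᵢ² / qᵢ`,
symmetrized using `Ψᵀ = Ψ`. For the logarithmic terms, Jensen's inequality for the concave `log`
with weights `qᵢ Ξᵢⱼ qⱼ / qᵀΞq` at the points `(pᵢ/qᵢ)(pⱼ/qⱼ)` gives
`∑ᵢⱼ qᵢ Ξᵢⱼ qⱼ (ln(pᵢ/qᵢ) + ln(pⱼ/qⱼ)) ≤ qᵀΞq · ln(pᵀΞp / qᵀΞq)`, and by symmetry of `Ξ` the left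
side is `2 qᵀΞ[q ln(p/q)]`. At `p = q` all the logarithms of ratios vanish and `p²/p = p`.
-/

open Real Finset

theorem Real.sum_mul_log_div_le {α : Type*} (s : Finset α) {a b : α → ℝ}
    (ha : ∀ x ∈ s, 0 < a x) (hb : ∀ x ∈ s, 0 < b x) :
    ∑ x ∈ s, a x * log (b x / a x) ≤ (∑ x ∈ s, a x) * log ((∑ x ∈ s, b x) / ∑ x ∈ s, a x) := by
  rcases s.eq_empty_or_nonempty with rfl | hs
  · simp
  set A := ∑ x ∈ s, a x
  have hA : 0 < A := sum_pos ha hs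
  have jensen := strictConcaveOn_log_Ioi.concaveOn.le_map_sum (t := s) (w := fun x ↦ a x / A)
    (p := fun x ↦ b x / a x) (fun x hx ↦ (div_pos (ha x hx) hA).le)
    (by rw [← sum_div, div_self hA.ne']) (fun x hx ↦ div_pos (hb x hx) (ha x hx))
  have hmean : ∑ x ∈ s, (a x / A) • (b x / a x) = (∑ x ∈ s, b x) / A := by
    rw [sum_div]
    exact sum_congr rfl fun x hx ↦ by rw [smul_eq_mul]; field_simp [(ha x hx).ne']
  rw [hmean] at jensen
  simp only [smul_eq_mul, div_mul_eq_mul_div, ← sum_div] at jensen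
  rwa [div_le_iff₀ hA, mul_comm] at jensen

variable {ι : Type*} [Fintype ι]

theorem Matrix.IsSymm.sum_sum_mul_mul_comm {M : Matrix ι ι ℝ} (hM : M.IsSymm) (u v : ι → ℝ) :
    ∑ i, ∑ j, u i * M i j * v j = ∑ i, ∑ j, v i * M i j * u j := by
  rw [sum_comm]
  exact sum_congr rfl fun i _ ↦ sum_congr rfl fun j _ ↦ by rw [hM.apply]; ring

theorem sum_sum_mul_mul_pos [Nonempty ι] {M : Matrix ι ι ℝ} (hM : ∀ i j, 0 < M i j)
    {p : ι → ℝ} (hp : ∀ i, 0 < p i) : 0 < ∑ i, ∑ j, p i * M i j * p j :=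
  sum_pos (fun i _ ↦ sum_pos (fun j _ ↦ mul_pos (mul_pos (hp i) (hM i j)) (hp j)) univ_nonempty)
    univ_nonempty

theorem Matrix.IsSymm.sum_sum_mul_mul_le_sum_sum_mul_mul_sq_div {M : Matrix ι ι ℝ}
    (hM : M.IsSymm) (hM₀ : ∀ i j, 0 ≤ M i j) (p : ι → ℝ) {q : ι → ℝ} (hq : ∀ i, 0 < q i) :
    ∑ i, ∑ j, p i * M i j * p j ≤ ∑ i, ∑ j, q i * M i j * (p j ^ 2 / q j) := by
  have amgm : ∀ i j, 2 * (p i * M i j * p j) ≤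
      q i * M i j * (p j ^ 2 / q j) + p i ^ 2 / q i * M i j * q j := by
    intro i j
    have hqi := hq i
    have hqj := hq j
    have hsq : q i * M i j * (p j ^ 2 / q j) + p i ^ 2 / q i * M i j * q j -
        2 * (p i * M i j * p j) = M i j * ((q i * p j - q j * p i) ^ 2 / (q i * q j)) := by
      field_simp
      ring
    have hnonneg := mul_nonneg (hM₀ i j) (div_nonneg (sq_nonneg (q i * p j - q j * p i))
      (mul_pos hqi hqj).le)
    linarith
  have hsum := sum_le_sum fun i (_ : i ∈ univ) ↦ sum_le_sum fun j (_ : j ∈ univ) ↦ amgm i j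
  simp only [← mul_sum, sum_add_distrib] at hsum
  have hswap := hM.sum_sum_mul_mul_comm (fun i ↦ p i ^ 2 / q i) q
  linarith

theorem Matrix.IsSymm.le_log_sum_sum_mul_mul {M : Matrix ι ι ℝ}
    (hM : M.IsSymm) (hM₀ : ∀ i j, 0 < M i j) {p q : ι → ℝ} (hp : ∀ i, 0 < p i)
    (hq : ∀ i, 0 < q i) :
    (2 * ∑ i, ∑ j, q i * M i j * (q j * log (p j / q j))) / (∑ i, ∑ j, q i * M i j * q j) +
        log (∑ i, ∑ j, q i * M i j * q j) ≤ log (∑ i, ∑ j, p i * M i j * p j) := by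
  cases isEmpty_or_nonempty ι
  · simp
  have hS := sum_sum_mul_mul_pos hM₀ hq
  have hSp := sum_sum_mul_mul_pos hM₀ hp
  have hterm : ∀ i j, q i * M i j * q j * log (p i * M i j * p j / (q i * M i j * q j)) =
      q i * M i j * (q j * log (p j / q j)) + q i * log (p i / q i) * M i j * q j := by
    intro i j
    have hratio : p i * M i j * p j / (q i * M i j * q j) = p i / q i * (p j / q j) := by
      field_simp [(hM₀ i j).ne']
    rw [hratio, log_mul (div_pos (hp i) (hq i)).ne' (div_pos (hp j) (hq j)).ne']
    ring
  have logsum := Real.sum_mul_log_div_le (univ ×ˢ univ)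
    (a := fun x ↦ q x.1 * M x.1 x.2 * q x.2) (b := fun x ↦ p x.1 * M x.1 x.2 * p x.2)
    (fun x _ ↦ mul_pos (mul_pos (hq _) (hM₀ _ _)) (hq _))
    (fun x _ ↦ mul_pos (mul_pos (hp _) (hM₀ _ _)) (hp _))
  simp only [sum_product, hterm, sum_add_distrib] at logsum
  have hswap := hM.sum_sum_mul_mul_comm q (fun i ↦ q i * log (p i / q i))
  rw [log_div hSp.ne' hS.ne'] at logsum
  have hdiv : (2 * ∑ i, ∑ j, q i * M i j * (q j * log (p j / q j))) / ∑ i, ∑ j, q i * M i j * q j ≤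
      log (∑ i, ∑ j, p i * M i j * p j) - log (∑ i, ∑ j, q i * M i j * q j) := by
    rw [div_le_iff₀ hS]
    linarith
  linarith

theorem auxiliary_function_lemma {n K : ℕ}
    (Ξ : Fin K → Matrix (Fin n) (Fin n) ℝ)
    (hΞsymm : ∀ k, (Ξ k).IsSymm) (hΞpos : ∀ k i j, 0 < Ξ k i j)
    (Ψ : Matrix (Fin n) (Fin n) ℝ) (hΨsymm : Ψ.IsSymm) (hΨnonneg : ∀ i j, 0 ≤ Ψ i j)
    (f : (Fin n → ℝ) → ℝ) (g : (Fin n → ℝ) → (Fin n → ℝ) → ℝ)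
    (hf : ∀ p, f p = -∑ k, Real.log (∑ i, ∑ j, p i * Ξ k i j * p j) +
        ∑ i, ∑ j, p i * Ψ i j * p j)
    (hg : ∀ p q, g p q =
        -∑ k, ((2 * ∑ i, ∑ j, q i * Ξ k i j * (q j * Real.log (p j / q j))) /
            (∑ i, ∑ j, q i * Ξ k i j * q j) +
          Real.log (∑ i, ∑ j, q i * Ξ k i j * q j)) +
        ∑ i, ∑ j, q i * Ψ i j * (p j ^ 2 / q j)) :
    (∀ p q : Fin n → ℝ, (∀ i, 0 < p i) → (∀ i, 0 < q i) → f p ≤ g p q) ∧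
    (∀ p : Fin n → ℝ, (∀ i, 0 < p i) → g p p = f p) := by
  refine ⟨fun p q hp hq ↦ ?_, fun p hp ↦ ?_⟩
  · have hlog := sum_le_sum fun k (_ : k ∈ univ) ↦ (hΞsymm k).le_log_sum_sum_mul_mul (hΞpos k) hp hq
    have hquad := hΨsymm.sum_sum_mul_mul_le_sum_sum_mul_mul_sq_div hΨnonneg p hq
    rw [hf, hg]
    linarith
  · have hp₀ j : p j ≠ 0 := (hp j).ne'
    simp [hf, hg, hp₀, sq]
end

section
/- Under the multiplicative update p^{t+1}_i = p^t_i * ( ∑_k (Ξ^k p^t)_i / ( ((p^t)ᵀ Ξ^k p^t) * (Ψ p^t)_i ) )^{1/2}, the objective f(p) = -∑_k ln(pᵀ Ξ^k p) + pᵀ Ψ p is non-increasing: f(p^{t+1}) ≤ f(p^t). -/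
/-!
The update is a majorize–minimize step. At `p = pᵗ`, Jensen's inequality for the concave `log`
(with weights `pᵢ Ξᵏᵢⱼ pⱼ / pᵀΞᵏp` on pairs `(i, j)`) and the bound
`2 qᵢ qⱼ ≤ (pⱼ/pᵢ) qᵢ² + (pᵢ/pⱼ) qⱼ²` give the separable surrogate
`g(q) = -∑ₖ log (pᵀΞᵏp) - 2 ∑ᵢ cᵢ log (qᵢ/pᵢ) + ∑ᵢ dᵢ qᵢ²`, where `cᵢ = ∑ₖ pᵢ (Ξᵏp)ᵢ / pᵀΞᵏp`
and `dᵢ = (Ψp)ᵢ / pᵢ`, with `f ≤ g` and `f p = g p`. The update solves `dᵢ qᵢ² = cᵢ`, which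
minimizes every coordinate of `g`, so `f pᵗ⁺¹ ≤ g pᵗ⁺¹ ≤ g pᵗ = f pᵗ`.
-/

open Finset Matrix Real

theorem sum_mul_log_le_log_sum_mul {α : Type*} {s : Finset α} {w x : α → ℝ}
    (hw : ∀ i ∈ s, 0 ≤ w i) (hw1 : ∑ i ∈ s, w i = 1) (hx : ∀ i ∈ s, 0 < x i) :
    ∑ i ∈ s, w i * log (x i) ≤ log (∑ i ∈ s, w i * x i) :=
  strictConcaveOn_log_Ioi.concaveOn.le_map_sum hw hw1 hx

theorem two_mul_mul_le_div_mul_sq_add_div_mul_sq {a b : ℝ} (ha : 0 < a) (hb : 0 < b) (x y : ℝ) :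
    2 * (x * y) ≤ b / a * x ^ 2 + a / b * y ^ 2 := by
  rw [div_mul_eq_mul_div, div_mul_eq_mul_div, div_add_div _ _ ha.ne' hb.ne',
    le_div_iff₀ (mul_pos ha hb)]
  nlinarith [sq_nonneg (b * x - a * y)]

theorem sq_mul_one_sub_two_mul_log_div_le_sq {p : ℝ} (hp : p ≠ 0) (q : ℝ) :
    q ^ 2 * (1 - 2 * log (q / p)) ≤ p ^ 2 := by
  have h := self_sub_one_le_mul_log (sq_nonneg (q / p))
  rw [log_pow, div_pow, div_sub_one (pow_ne_zero 2 hp), div_mul_eq_mul_div,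
    div_le_div_iff_of_pos_right (by positivity)] at h
  push_cast at h
  linarith

section

variable {ι : Type*} [Fintype ι]

theorem sum_sum_mul_mul_eq_dotProduct_mulVec (A : Matrix ι ι ℝ) (p : ι → ℝ) :
    ∑ i, ∑ j, p i * A i j * p j = p ⬝ᵥ (A *ᵥ p) := by
  simp only [dotProduct, mulVec, mul_sum, mul_assoc]

theorem mulVec_apply_pos [Nonempty ι] {A : Matrix ι ι ℝ} (hA : ∀ i j, 0 < A i j) {p : ι → ℝ}
    (hp : ∀ i, 0 < p i) (i : ι) : 0 < (A *ᵥ p) i :=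
  sum_pos (fun j _ => mul_pos (hA i j) (hp j)) univ_nonempty

theorem dotProduct_mulVec_pos [Nonempty ι] {A : Matrix ι ι ℝ} (hA : ∀ i j, 0 < A i j)
    {p : ι → ℝ} (hp : ∀ i, 0 < p i) : 0 < p ⬝ᵥ (A *ᵥ p) :=
  sum_pos (fun i _ => mul_pos (hp i) (mulVec_apply_pos hA hp i)) univ_nonempty

theorem dotProduct_mulVec_le_sum_mulVec_div_mul_sq {A : Matrix ι ι ℝ} (hA : A.IsSymm)
    (hA0 : ∀ i j, 0 ≤ A i j) {p : ι → ℝ} (hp : ∀ i, 0 < p i) (q : ι → ℝ) :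
    q ⬝ᵥ (A *ᵥ q) ≤ ∑ i, (A *ᵥ p) i / p i * q i ^ 2 := by
  have hterm : ∀ i j, 2 * (q i * A i j * q j) ≤
      A i j * p j / p i * q i ^ 2 + A j i * p i / p j * q j ^ 2 := by
    intro i j
    have := mul_le_mul_of_nonneg_left
      (two_mul_mul_le_div_mul_sq_add_div_mul_sq (hp i) (hp j) (q i) (q j)) (hA0 i j)
    rw [hA.apply i j]
    linarith [show A i j * (p j / p i * q i ^ 2 + p i / p j * q j ^ 2) =
      A i j * p j / p i * q i ^ 2 + A i j * p i / p j * q j ^ 2 by ring]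
  have hrow : ∑ i, ∑ j, A i j * p j / p i * q i ^ 2 = ∑ i, (A *ᵥ p) i / p i * q i ^ 2 := by
    simp only [mulVec, dotProduct, sum_div, sum_mul]
  have hcol : ∑ i, ∑ j, A j i * p i / p j * q j ^ 2 = ∑ i, (A *ᵥ p) i / p i * q i ^ 2 := by
    rw [sum_comm, hrow]
  have hsum := sum_le_sum fun i (_ : i ∈ univ) => sum_le_sum fun j (_ : j ∈ univ) => hterm i j
  simp only [← mul_sum, sum_add_distrib, hrow, hcol, sum_sum_mul_mul_eq_dotProduct_mulVec] at hsum
  linarith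

theorem le_log_dotProduct_mulVec {A : Matrix ι ι ℝ} (hA : A.IsSymm) (hA0 : ∀ i j, 0 ≤ A i j)
    {p q : ι → ℝ} (hp : ∀ i, 0 < p i) (hpA : 0 < p ⬝ᵥ (A *ᵥ p)) (hq : ∀ i, 0 < q i) :
    log (p ⬝ᵥ (A *ᵥ p)) + 2 * ∑ i, p i * (A *ᵥ p) i / (p ⬝ᵥ (A *ᵥ p)) * log (q i / p i) ≤
      log (q ⬝ᵥ (A *ᵥ q)) := by
  set s := p ⬝ᵥ (A *ᵥ p)
  set w : ι × ι → ℝ := fun x => p x.1 * A x.1 x.2 * p x.2 / s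
  set r : ι → ℝ := fun i => q i / p i
  have hr : ∀ i, 0 < r i := fun i => div_pos (hq i) (hp i)
  have hw0 : ∀ x ∈ univ, 0 ≤ w x := fun x _ =>
    div_nonneg (mul_nonneg (mul_nonneg (hp _).le (hA0 _ _)) (hp _).le) hpA.le
  have hw1 : ∑ x, w x = 1 := by
    rw [← div_self hpA.ne', Fintype.sum_prod_type]
    simp only [w, ← sum_div, sum_sum_mul_mul_eq_dotProduct_mulVec, s]
  have hrow : ∀ i, ∑ j, w (i, j) = p i * (A *ᵥ p) i / s := fun i => by
    simp only [w, mulVec, dotProduct, ← sum_div, mul_sum, mul_assoc]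
  have hcol : ∀ j, ∑ i, w (i, j) = p j * (A *ᵥ p) j / s := fun j => by
    rw [← hrow j]
    refine sum_congr rfl fun i _ => ?_
    simp only [w, hA.apply j i]
    ring
  have hwx : ∑ x, w x * (s * (r x.1 * r x.2)) = q ⬝ᵥ (A *ᵥ q) := by
    rw [Fintype.sum_prod_type, ← sum_sum_mul_mul_eq_dotProduct_mulVec]
    refine sum_congr rfl fun i _ => sum_congr rfl fun j _ => ?_
    simp only [w, r]
    field_simp [(hp i).ne', (hp j).ne', hpA.ne']
  have hlog : ∑ x, w x * log (s * (r x.1 * r x.2)) =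
      log s + 2 * ∑ i, p i * (A *ᵥ p) i / s * log (r i) := by
    have hsplit : ∀ x : ι × ι, w x * log (s * (r x.1 * r x.2)) =
        w x * log s + w x * log (r x.1) + w x * log (r x.2) := fun x => by
      rw [log_mul hpA.ne' (mul_pos (hr _) (hr _)).ne', log_mul (hr _).ne' (hr _).ne']
      ring
    simp only [hsplit, sum_add_distrib, ← sum_mul, hw1, one_mul]
    rw [Fintype.sum_prod_type, Fintype.sum_prod_type_right]
    simp only [← sum_mul, hrow, hcol]
    ring
  have hJensen := sum_mul_log_le_log_sum_mul hw0 hw1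
    fun x _ => mul_pos hpA (mul_pos (hr x.1) (hr x.2))
  rwa [hlog, hwx] at hJensen

theorem neg_sum_log_add_dotProduct_mulVec_le_of_update [Nonempty ι] {κ : Type*} [Fintype κ]
    {Ξ : κ → Matrix ι ι ℝ} (hΞsymm : ∀ k, (Ξ k).IsSymm) (hΞpos : ∀ k i j, 0 < Ξ k i j)
    {Ψ : Matrix ι ι ℝ} (hΨsymm : Ψ.IsSymm) (hΨpos : ∀ i j, 0 < Ψ i j)
    {p q : ι → ℝ} (hp : ∀ i, 0 < p i) (hq : ∀ i, 0 ≤ q i)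
    (hq_sq : ∀ i, (Ψ *ᵥ p) i / p i * q i ^ 2 =
      ∑ k, p i * (Ξ k *ᵥ p) i / (p ⬝ᵥ (Ξ k *ᵥ p))) :
    -∑ k, log (q ⬝ᵥ (Ξ k *ᵥ q)) + q ⬝ᵥ (Ψ *ᵥ q) ≤
      -∑ k, log (p ⬝ᵥ (Ξ k *ᵥ p)) + p ⬝ᵥ (Ψ *ᵥ p) := by
  set c : ι → ℝ := fun i => ∑ k, p i * (Ξ k *ᵥ p) i / (p ⬝ᵥ (Ξ k *ᵥ p))
  set d : ι → ℝ := fun i => (Ψ *ᵥ p) i / p i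
  have hdc : ∀ i, d i * q i ^ 2 = c i := hq_sq
  have hs : ∀ k, 0 < p ⬝ᵥ (Ξ k *ᵥ p) := fun k => dotProduct_mulVec_pos (hΞpos k) hp
  have hd : ∀ i, 0 < d i := fun i => div_pos (mulVec_apply_pos hΨpos hp i) (hp i)
  -- with no `k` the update is `q = 0`, so positivity of `q` needs some `k`
  have hq_pos : κ → ∀ i, 0 < q i := fun k i => by
    have hc : 0 < c i := sum_pos (fun k _ =>
      div_pos (mul_pos (hp i) (mulVec_apply_pos (hΞpos k) hp i)) (hs k)) ⟨k, mem_univ k⟩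
    rw [← hdc i] at hc
    exact (hq i).lt_of_ne fun h => by simp [← h] at hc
  have hlog : ∑ k, log (p ⬝ᵥ (Ξ k *ᵥ p)) + 2 * ∑ i, c i * log (q i / p i) ≤
      ∑ k, log (q ⬝ᵥ (Ξ k *ᵥ q)) := by
    have h := sum_le_sum fun k (_ : k ∈ univ) => le_log_dotProduct_mulVec (hΞsymm k)
      (fun i j => (hΞpos k i j).le) hp (hs k) (hq_pos k)
    rw [sum_add_distrib, ← mul_sum, sum_comm] at h
    simpa only [← sum_mul] using h
  have hquad := dotProduct_mulVec_le_sum_mulVec_div_mul_sq hΨsymm (fun i j => (hΨpos i j).le) hp q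
  have hcoord : ∀ i, d i * q i ^ 2 - 2 * (c i * log (q i / p i)) ≤ p i * (Ψ *ᵥ p) i := fun i =>
    calc d i * q i ^ 2 - 2 * (c i * log (q i / p i))
        = d i * (q i ^ 2 * (1 - 2 * log (q i / p i))) := by rw [← hdc i]; ring
      _ ≤ d i * p i ^ 2 :=
        mul_le_mul_of_nonneg_left (sq_mul_one_sub_two_mul_log_div_le_sq (hp i).ne' _) (hd i).le
      _ = p i * (Ψ *ᵥ p) i := by simp only [d]; field_simp [(hp i).ne']
  have hsurrogate := sum_le_sum fun i (_ : i ∈ univ) => hcoord i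
  rw [sum_sub_distrib, ← mul_sum] at hsurrogate
  change _ ≤ p ⬝ᵥ (Ψ *ᵥ p) at hsurrogate
  linarith

end

theorem multiplicative_update_decreases_objective {n K : ℕ}
    (Ξ : Fin K → Matrix (Fin n) (Fin n) ℝ)
    (hΞsymm : ∀ k, (Ξ k).IsSymm) (hΞpos : ∀ k i j, 0 < Ξ k i j)
    (Ψ : Matrix (Fin n) (Fin n) ℝ) (hΨsymm : Ψ.IsSymm) (hΨpos : ∀ i j, 0 < Ψ i j)
    (pt : Fin n → ℝ) (hpt : ∀ i, 0 < pt i)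
    (pnext : Fin n → ℝ)
    (hupd : ∀ i, pnext i = pt i *
        (∑ k, (∑ j, Ξ k i j * pt j) /
          ((∑ i', ∑ j, pt i' * Ξ k i' j * pt j) * (∑ j, Ψ i j * pt j))) ^ ((1 : ℝ) / 2))
    (f : (Fin n → ℝ) → ℝ)
    (hf : ∀ p, f p = -∑ k, Real.log (∑ i, ∑ j, p i * Ξ k i j * p j) +
        ∑ i, ∑ j, p i * Ψ i j * p j) :
    f pnext ≤ f pt := by
  obtain hn | hn := isEmpty_or_nonempty (Fin n)
  · exact (congrArg f (Subsingleton.elim pnext pt)).le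
  simp only [sum_sum_mul_mul_eq_dotProduct_mulVec] at hupd
  change ∀ i, pnext i = pt i * (∑ k, (Ξ k *ᵥ pt) i /
    ((pt ⬝ᵥ (Ξ k *ᵥ pt)) * (Ψ *ᵥ pt) i)) ^ ((1 : ℝ) / 2) at hupd
  have hbase : ∀ i, 0 ≤ ∑ k, (Ξ k *ᵥ pt) i / ((pt ⬝ᵥ (Ξ k *ᵥ pt)) * (Ψ *ᵥ pt) i) := fun i =>
    sum_nonneg fun k _ => (div_pos (mulVec_apply_pos (hΞpos k) hpt i) (mul_pos
      (dotProduct_mulVec_pos (hΞpos k) hpt) (mulVec_apply_pos hΨpos hpt i))).le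
  have hnext_sq : ∀ i, (Ψ *ᵥ pt) i / pt i * pnext i ^ 2 =
      ∑ k, pt i * (Ξ k *ᵥ pt) i / (pt ⬝ᵥ (Ξ k *ᵥ pt)) := fun i => by
    rw [hupd i, ← sqrt_eq_rpow, mul_pow, sq_sqrt (hbase i), mul_sum, mul_sum]
    refine sum_congr rfl fun k _ => ?_
    field_simp [(hpt i).ne', (mulVec_apply_pos hΨpos hpt i).ne']
  have hnext_nonneg : ∀ i, 0 ≤ pnext i := fun i => by
    rw [hupd i, ← sqrt_eq_rpow]
    exact mul_nonneg (hpt i).le (sqrt_nonneg _)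
  simp only [hf, sum_sum_mul_mul_eq_dotProduct_mulVec]
  exact neg_sum_log_add_dotProduct_mulVec_le_of_update hΞsymm hΞpos hΨsymm hΨpos hpt
    hnext_nonneg hnext_sq
end

section
/- For a symmetric matrix Ξ with strictly positive entries and positive vectors p, q, the bound ln(pᵀΞp) - ln(qᵀΞq) ≥ 2 qᵀ Ξ [q ln(p/q)] / (qᵀ Ξ q) holds. -/
open Finset

theorem log_quadratic_form_diff_lower_bound {n : ℕ} (Ξ : Matrix (Fin n) (Fin n) ℝ)
    (hsymm : Ξ.IsSymm) (hpos : ∀ i j, 0 < Ξ i j)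
    (p q : Fin n → ℝ) (hp : ∀ i, 0 < p i) (hq : ∀ i, 0 < q i) :
    Real.log (∑ i, ∑ j, p i * Ξ i j * p j) - Real.log (∑ i, ∑ j, q i * Ξ i j * q j) ≥
      2 * (∑ i, ∑ j, q i * Ξ i j * (q j * Real.log (p j / q j))) /
        (∑ i, ∑ j, q i * Ξ i j * q j) := by
  rcases Nat.eq_zero_or_pos n with hn | hn
  · subst hn; simp
  · haveI : NeZero n := ⟨hn.ne'⟩
    have hune : (Finset.univ : Finset (Fin n)).Nonempty := univ_nonempty
    set Q := ∑ i, ∑ j, q i * Ξ i j * q j with hQdef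
    set P := ∑ i, ∑ j, p i * Ξ i j * p j with hPdef
    set S := ∑ i, ∑ j, q i * Ξ i j * (q j * Real.log (p j / q j)) with hSdef
    have hQ : 0 < Q := by
      refine Finset.sum_pos (fun i _ => Finset.sum_pos (fun j _ => ?_) hune) hune
      exact mul_pos (mul_pos (hq i) (hpos i j)) (hq j)
    have hP : 0 < P := by
      refine Finset.sum_pos (fun i _ => Finset.sum_pos (fun j _ => ?_) hune) hune
      exact mul_pos (mul_pos (hp i) (hpos i j)) (hp j)
    set w : Fin n × Fin n → ℝ := fun ij => q ij.1 * Ξ ij.1 ij.2 * q ij.2 / Q with hwdef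
    set x : Fin n × Fin n → ℝ := fun ij => p ij.1 * p ij.2 / (q ij.1 * q ij.2) with hxdef
    have hw : ∀ ij ∈ (Finset.univ : Finset (Fin n × Fin n)), 0 ≤ w ij := by
      intro ij _
      exact div_nonneg (mul_pos (mul_pos (hq _) (hpos _ _)) (hq _)).le hQ.le
    have hw1 : ∑ ij : Fin n × Fin n, w ij = 1 := by
      rw [hwdef, ← Finset.sum_div, Fintype.sum_prod_type, ← hQdef, div_self hQ.ne']
    have hmem : ∀ ij ∈ (Finset.univ : Finset (Fin n × Fin n)), x ij ∈ Set.Ioi (0:ℝ) := by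
      intro ij _
      exact div_pos (mul_pos (hp _) (hp _)) (mul_pos (hq _) (hq _))
    have jensen := strictConcaveOn_log_Ioi.concaveOn.le_map_sum hw hw1 hmem
    have hsx : ∑ ij : Fin n × Fin n, w ij • x ij = P / Q := by
      have h1 : ∀ ij : Fin n × Fin n, w ij • x ij = p ij.1 * Ξ ij.1 ij.2 * p ij.2 / Q := by
        intro ij
        simp only [hwdef, hxdef, smul_eq_mul]
        have h1 := (hq ij.1).ne'
        have h2 := (hq ij.2).ne'
        field_simp
      rw [Finset.sum_congr rfl (fun ij _ => h1 ij), ← Finset.sum_div,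
        Fintype.sum_prod_type, ← hPdef]
    have hlogx : ∀ ij : Fin n × Fin n, Real.log (x ij) =
        Real.log (p ij.1 / q ij.1) + Real.log (p ij.2 / q ij.2) := by
      intro ij
      simp only [hxdef]
      have : p ij.1 * p ij.2 / (q ij.1 * q ij.2) = (p ij.1 / q ij.1) * (p ij.2 / q ij.2) := by
        rw [div_mul_div_comm]
      rw [this, Real.log_mul (div_pos (hp _) (hq _)).ne' (div_pos (hp _) (hq _)).ne']
    have hswap : (∑ i, ∑ j, q i * Ξ i j * q j * Real.log (p i / q i)) = S := by
      rw [Finset.sum_comm, hSdef]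
      refine Finset.sum_congr rfl (fun j _ => Finset.sum_congr rfl (fun i _ => ?_))
      rw [hsymm.apply j i]
      ring
    have hslog : ∑ ij : Fin n × Fin n, w ij • Real.log (x ij) = 2 * S / Q := by
      have h1 : ∀ ij : Fin n × Fin n, w ij • Real.log (x ij) =
          q ij.1 * Ξ ij.1 ij.2 * q ij.2 * Real.log (p ij.1 / q ij.1) / Q +
          q ij.1 * Ξ ij.1 ij.2 * q ij.2 * Real.log (p ij.2 / q ij.2) / Q := by
        intro ij
        rw [hlogx ij]
        simp only [hwdef, smul_eq_mul]
        ring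
      rw [Finset.sum_congr rfl (fun ij _ => h1 ij), Finset.sum_add_distrib,
        ← Finset.sum_div, ← Finset.sum_div, Fintype.sum_prod_type, Fintype.sum_prod_type]
      have h2 : (∑ i, ∑ j, q i * Ξ i j * q j * Real.log (p j / q j)) = S := by
        rw [hSdef]
        exact Finset.sum_congr rfl (fun i _ => Finset.sum_congr rfl (fun j _ => by ring))
      rw [hswap, h2]
      ring
    rw [hsx] at jensen
    rw [hslog] at jensen
    rw [Real.log_div hP.ne' hQ.ne'] at jensen
    exact jensen
end
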